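/- Let P be a partition in a set A and let {J_1, …, J_p} be a partition with R({J_j}) ⊆ R(P) that admits to P. Then the iterated quotient P/(J_1, …, J_p) equals the successive simple quotients by the restrictions of the original P: P/(J_1, …, J_p) = (⋯((P/P_(J_1))/P_(J_2))⋯)/P_(J_p), where at each step the restriction of the current partition to J_k equals P_(J_k). -/

import Mathlib

/-!
Admissibility makes the blocks `R_{P,J_k}` pairwise disjoint. Quotienting by `J_1` only merges
the members of `P` inside `R_{P,J_1}`, so it changes neither the members meeting a later `J_k`
nor `R_{P,J_k}`: the restriction to each later `J_k`, and admissibility of the remaining family,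
survive every step. Moreover `R(P_(J)) = J` for `J ⊆ R(P)`, so quotienting by `P_(J)` is
quotienting by `J`.
-/

namespace PartitionOps

variable {α : Type*} [DecidableEq α]

/-- The support `R(P)` of a collection of finite sets: the union of its members. -/
def supp (P : Finset (Finset α)) : Finset α := P.sup id

/-- A partition in `A`: a finite collection of pairwise disjoint nonempty finite sets. -/
def IsPartition (P : Finset (Finset α)) : Prop :=
  (∀ I ∈ P, I.Nonempty) ∧ ∀ I ∈ P, ∀ I' ∈ P, I ≠ I' → Disjoint I I'

/-- The restriction `P_(B) = { I ∩ B : I ∈ P, I ∩ B ≠ ∅ }`. -/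
def restrict (P : Finset (Finset α)) (B : Finset α) : Finset (Finset α) :=
  (P.filter fun I => (I ∩ B).Nonempty).image (· ∩ B)

/-- `R_{P,B}`: the union of the members of `P` meeting `B`. -/
def RB (P : Finset (Finset α)) (B : Finset α) : Finset α :=
  (P.filter fun I => (I ∩ B).Nonempty).sup id

/-- The quotient `P / P_(B)`: the members of `P` disjoint from `B`, together with
`R_{P,B} \ B` (omitted when empty). -/
def quot (P : Finset (Finset α)) (B : Finset α) : Finset (Finset α) :=
  (insert (RB P B \ B) (P.filter fun I => I ∩ B = ∅)).erase ∅

/-- Quotient of `P` by a partition `Q` (meaningful when `Q` coincides with the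
restriction of `P` to the support of `Q`): `P / Q := P / P_(R(Q))`. -/
def quotBy (P Q : Finset (Finset α)) : Finset (Finset α) := quot P (supp Q)

/-- The iterated quotient `P/(J_1, …, J_p)`, defined recursively by
`P/(J_1) = P/P_(J_1)` and
`P/(J_1, …, J_{k+1}) = (P/(J_1, …, J_k)) / (P/(J_1, …, J_k))_(J_{k+1})`. -/
def iterQuot (P : Finset (Finset α)) : List (Finset α) → Finset (Finset α)
  | [] => P
  | B :: Bs => iterQuot (quot P B) Bs

/-- A family `{J_j}` (given as a list) admits to `P`: `R({J_j}) ⊆ R(P)` and the sets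
`R_{P,J_j}` are pairwise disjoint. -/
def AdmitsL (Js : List (Finset α)) (P : Finset (Finset α)) : Prop :=
  (∀ J ∈ Js, J ⊆ supp P) ∧
    Js.Pairwise fun J J' => Disjoint (RB P J) (RB P J')

section

variable {P : Finset (Finset α)} {B J : Finset α}

lemma mem_supp {x : α} : x ∈ supp P ↔ ∃ I ∈ P, x ∈ I := by
  simp [supp, Finset.mem_sup]

lemma mem_RB {x : α} : x ∈ RB P B ↔ ∃ I ∈ P, (I ∩ B).Nonempty ∧ x ∈ I := by
  simp [RB, Finset.mem_sup, and_assoc]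

lemma subset_RB_of_mem {I : Finset α} (hI : I ∈ P) (h : (I ∩ B).Nonempty) : I ⊆ RB P B :=
  fun _ hx => mem_RB.2 ⟨I, hI, h, hx⟩

lemma subset_RB (h : B ⊆ supp P) : B ⊆ RB P B := fun x hx => by
  obtain ⟨I, hI, hxI⟩ := mem_supp.1 (h hx)
  exact subset_RB_of_mem hI ⟨x, Finset.mem_inter.2 ⟨hxI, hx⟩⟩ hxI

lemma supp_restrict (h : J ⊆ supp P) : supp (restrict P J) = J := by
  rw [supp, restrict, Finset.sup_image, Function.id_comp]
  exact (Finset.sup_inf_distrib_right _ id J).symm.trans (Finset.inter_eq_right.2 (subset_RB h))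

lemma quotBy_restrict (h : J ⊆ supp P) (Q : Finset (Finset α)) :
    quotBy Q (restrict P J) = quot Q J := by
  rw [quotBy, supp_restrict h]

lemma mem_quot {S : Finset α} :
    S ∈ quot P B ↔ S ≠ ∅ ∧ (S = RB P B \ B ∨ S ∈ P ∧ S ∩ B = ∅) := by
  simp [quot]

lemma mem_quot_of_disjoint {I : Finset α} (hI : I ∈ P) (hne : I.Nonempty)
    (hIB : Disjoint I B) : I ∈ quot P B :=
  mem_quot.2 ⟨hne.ne_empty, Or.inr ⟨hI, Finset.disjoint_iff_inter_eq_empty.1 hIB⟩⟩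

lemma filter_quot_of_disjoint_RB (hB : B ⊆ supp P) (hJ : J ⊆ supp P)
    (hd : Disjoint (RB P B) (RB P J)) :
    (quot P B).filter (fun I => (I ∩ J).Nonempty) = P.filter (fun I => (I ∩ J).Nonempty) := by
  ext S
  simp only [Finset.mem_filter]
  constructor
  · rintro ⟨hS, hSJ⟩
    obtain ⟨-, rfl | ⟨hSP, -⟩⟩ := mem_quot.1 hS
    · have : Disjoint (RB P B \ B) J := hd.mono Finset.sdiff_subset (subset_RB hJ)
      exact absurd this (Finset.not_disjoint_iff_nonempty_inter.2 hSJ)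
    · exact ⟨hSP, hSJ⟩
  · rintro ⟨hSP, hSJ⟩
    have hSB : Disjoint S B := hd.symm.mono (subset_RB_of_mem hSP hSJ) (subset_RB hB)
    exact ⟨mem_quot_of_disjoint hSP (hSJ.mono Finset.inter_subset_left) hSB, hSJ⟩

lemma restrict_quot (hB : B ⊆ supp P) (hJ : J ⊆ supp P) (hd : Disjoint (RB P B) (RB P J)) :
    restrict (quot P B) J = restrict P J := by
  rw [restrict, restrict, filter_quot_of_disjoint_RB hB hJ hd]

lemma RB_quot (hB : B ⊆ supp P) (hJ : J ⊆ supp P) (hd : Disjoint (RB P B) (RB P J)) :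
    RB (quot P B) J = RB P J := by
  rw [RB, RB, filter_quot_of_disjoint_RB hB hJ hd]

lemma subset_supp_quot (hB : B ⊆ supp P) (hJ : J ⊆ supp P) (hd : Disjoint (RB P B) (RB P J)) :
    J ⊆ supp (quot P B) := fun x hx => by
  obtain ⟨I, hI, hxI⟩ := mem_supp.1 (hJ hx)
  have hIJ : (I ∩ J).Nonempty := ⟨x, Finset.mem_inter.2 ⟨hxI, hx⟩⟩
  have hIB : Disjoint I B := hd.symm.mono (subset_RB_of_mem hI hIJ) (subset_RB hB)
  exact mem_supp.2 ⟨I, mem_quot_of_disjoint hI ⟨x, hxI⟩ hIB, hxI⟩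

end

lemma AdmitsL.sublist {P : Finset (Finset α)} {Js Js' : List (Finset α)} (h : AdmitsL Js P)
    (hs : Js'.Sublist Js) : AdmitsL Js' P :=
  ⟨fun J hJ => h.1 J (hs.subset hJ), h.2.sublist hs⟩

lemma AdmitsL.quot_of_cons {P : Finset (Finset α)} {B : Finset α} {Js : List (Finset α)}
    (h : AdmitsL (B :: Js) P) : AdmitsL Js (quot P B) := by
  obtain ⟨hsub, hpair⟩ := h
  rw [List.pairwise_cons] at hpair
  have hB := hsub B List.mem_cons_self
  have hJs : ∀ J ∈ Js, J ⊆ supp P := fun J hJ => hsub J (List.mem_cons_of_mem _ hJ)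
  refine ⟨fun J hJ => subset_supp_quot hB (hJs J hJ) (hpair.1 J hJ), hpair.2.imp_of_mem ?_⟩
  intro J J' hJ hJ' hd
  rwa [RB_quot hB (hJs J hJ) (hpair.1 J hJ), RB_quot hB (hJs J' hJ') (hpair.1 J' hJ')]

lemma restrict_iterQuot {P : Finset (Finset α)} {J : Finset α} {Bs : List (Finset α)}
    (h : AdmitsL (Bs ++ [J]) P) : restrict (iterQuot P Bs) J = restrict P J := by
  induction Bs generalizing P with
  | nil => rfl
  | cons B Bs ih =>
    have hB : B ⊆ supp P := h.1 B List.mem_cons_self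
    have hJ : J ⊆ supp P := h.1 J (by simp)
    have hd : Disjoint (RB P B) (RB P J) := (List.pairwise_cons.1 h.2).1 J (by simp)
    rw [iterQuot, ih h.quot_of_cons, restrict_quot hB hJ hd]

lemma foldl_quotBy_restrict_eq_iterQuot {P : Finset (Finset α)} {Js : List (Finset α)}
    (h : ∀ J ∈ Js, J ⊆ supp P) (Q : Finset (Finset α)) :
    Js.foldl (fun Q J => quotBy Q (restrict P J)) Q = iterQuot Q Js := by
  induction Js generalizing Q with
  | nil => rfl
  | cons J Js ih =>
    rw [List.foldl_cons, quotBy_restrict (h J List.mem_cons_self), iterQuot,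
      ih fun J' hJ' => h J' (List.mem_cons_of_mem _ hJ')]

theorem iterQuot_eq_foldl_quotBy_general (P : Finset (Finset α))
    (Js : List (Finset α)) (hadm : AdmitsL Js P) :
    iterQuot P Js = Js.foldl (fun Q J => quotBy Q (restrict P J)) P ∧
      ∀ k : Fin Js.length,
        restrict (iterQuot P (Js.take k)) (Js.get k) = restrict P (Js.get k) := by
  refine ⟨(foldl_quotBy_restrict_eq_iterQuot hadm.1 P).symm, fun k => ?_⟩
  have hprefix : (Js.take k ++ [Js.get k]).Sublist Js := by
    rw [List.get_eq_getElem, List.take_concat_get' _ _ k.isLt]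
    exact List.take_sublist _ _
  exact restrict_iterQuot (hadm.sublist hprefix)

/-- if the partition `{J_1, …, J_p}` admits to `P`, the iterated
quotient `P/(J_1, …, J_p)` equals the successive simple quotients by the restrictions
of the original `P`, `(⋯((P/P_(J_1))/P_(J_2))⋯)/P_(J_p)`, and at each step the
restriction of the current partition to `J_k` equals `P_(J_k)`. -/
theorem iterQuot_eq_foldl_quotBy (P : Finset (Finset α)) (hP : IsPartition P)
    (Js : List (Finset α)) (hne : ∀ J ∈ Js, J.Nonempty)
    (hdisj : Js.Pairwise Disjoint) (hnd : Js.Nodup) (hadm : AdmitsL Js P) :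
    iterQuot P Js = Js.foldl (fun Q J => quotBy Q (restrict P J)) P ∧
      ∀ k : Fin Js.length,
        restrict (iterQuot P (Js.take k)) (Js.get k) = restrict P (Js.get k) :=
  iterQuot_eq_foldl_quotBy_general P Js hadm

end PartitionOps
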